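/- Define N₆(η) := cosh(η)/sinh⁴(η) − (3/2)·cosh(η)/sinh²(η) − (3/2)·log(tanh(η/2)) for η > 0. Then N₆(η) > 0 for all sufficiently large η and lim_{η→∞} (1/η) · log N₆(η) = −5. -/
import Mathlib


open Real Filter

/-- Numerator of the hitting probability of the 6-dimensional hyperbolic Brownian motion:
`N₆(η) = cosh η / sinh⁴ η - (3/2) cosh η / sinh² η - (3/2) log(tanh(η/2))`. -/
noncomputable def N₆ (η : ℝ) : ℝ :=
  Real.cosh η / Real.sinh η ^ 4 - (3 / 2) * (Real.cosh η / Real.sinh η ^ 2) -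
    (3 / 2) * Real.log (Real.tanh (η / 2))

lemma N6_eq {η : ℝ} (hη : 0 < η) :
    N₆ η = 8 * exp (-η) ^ 3 * (1 + exp (-η) ^ 2) / (1 - exp (-η) ^ 2) ^ 4
      - 3 * exp (-η) * (1 + exp (-η) ^ 2) / (1 - exp (-η) ^ 2) ^ 2
      + (3 / 2) * (Real.log (1 + exp (-η)) - Real.log (1 - exp (-η))) := by
  set x := exp (-η) with hxdef
  have hx0 : 0 < x := exp_pos _
  have hx1 : x < 1 := by
    rw [hxdef]
    exact exp_lt_one_iff.mpr (by linarith)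
  have hxe : Real.exp η = 1 / x := by
    rw [eq_div_iff hx0.ne', hxdef, ← Real.exp_add]
    simp
  have hsinh : Real.sinh η = (1 - x ^ 2) / (2 * x) := by
    rw [Real.sinh_eq, hxe]
    field_simp
    ring
  have hcosh : Real.cosh η = (1 + x ^ 2) / (2 * x) := by
    rw [Real.cosh_eq, hxe]
    field_simp
    ring
  have hz2 : Real.exp (-(η/2)) * Real.exp (-(η/2)) = x := by
    rw [← Real.exp_add, hxdef]; ring_nf
  have hyz : Real.exp (η/2) * Real.exp (-(η/2)) = 1 := by
    rw [← Real.exp_add]; simp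
  have htanh : Real.tanh (η / 2) = (1 - x) / (1 + x) := by
    rw [Real.tanh_eq_sinh_div_cosh, Real.sinh_eq, Real.cosh_eq]
    have hy0 : 0 < Real.exp (η/2) := exp_pos _
    have hz0 : 0 < Real.exp (-(η/2)) := exp_pos _
    rw [div_eq_div_iff (by positivity) (by positivity)]
    nlinarith [hz2, hyz]
  have hlog : Real.log (Real.tanh (η / 2)) = Real.log (1 - x) - Real.log (1 + x) := by
    rw [htanh, Real.log_div (by linarith) (by linarith)]
  have hs0 : (1 - x ^ 2) ≠ 0 := by nlinarith
  rw [N₆, hlog, hsinh, hcosh]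
  field_simp
  ring

lemma log_taylor_bound {x : ℝ} (hx0 : 0 < x) (hx1 : x < 1) :
    |Real.log (1 + x) - Real.log (1 - x) - (2 * x + 2 / 3 * x ^ 3)| ≤ 2 * (x ^ 5 / (1 - x)) := by
  have hax : |x| < 1 := by rw [abs_of_pos hx0]; exact hx1
  have hax' : |(-x)| < 1 := by rwa [abs_neg]
  have E1 := Real.abs_log_sub_add_sum_range_le hax 4
  have E2 := Real.abs_log_sub_add_sum_range_le hax' 4
  rw [abs_of_pos hx0] at E1
  rw [abs_neg, abs_of_pos hx0] at E2
  have hsum1 : (∑ i ∈ Finset.range 4, x ^ (i + 1) / (i + 1)) =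
      x + x ^ 2 / 2 + x ^ 3 / 3 + x ^ 4 / 4 := by
    simp [Finset.sum_range_succ]
    norm_num
  have hsum2 : (∑ i ∈ Finset.range 4, (-x) ^ (i + 1) / (i + 1)) =
      -x + x ^ 2 / 2 - x ^ 3 / 3 + x ^ 4 / 4 := by
    simp [Finset.sum_range_succ]
    norm_num
    ring
  rw [hsum1] at E1
  rw [hsum2] at E2
  have h1 : (1 : ℝ) - -x = 1 + x := by ring
  rw [h1] at E2
  norm_num at E1 E2
  have hE1 := abs_le.mp E1
  have hE2 := abs_le.mp E2
  have ht : 0 ≤ x ^ 5 / (1 - x) := div_nonneg (by positivity) (by linarith)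
  rw [abs_le]
  constructor <;> linarith [hE1.1, hE1.2, hE2.1, hE2.2, ht]

set_option maxHeartbeats 1000000 in
lemma N6_bounds {η : ℝ} (hη : Real.log 2 ≤ η) :
    9 * exp (-η) ^ 5 ≤ N₆ η ∧ N₆ η ≤ 89 * exp (-η) ^ 5 := by
  have h2 : (0:ℝ) < Real.log 2 := Real.log_pos (by norm_num)
  have hη0 : 0 < η := lt_of_lt_of_le h2 hη
  set x := exp (-η) with hxdef
  have hx0 : 0 < x := exp_pos _
  have hxh : x ≤ 1/2 := by
    rw [hxdef]
    calc exp (-η) ≤ exp (-(Real.log 2)) := exp_le_exp.mpr (by linarith)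
      _ = 1/2 := by
          rw [Real.exp_neg, Real.exp_log (by norm_num : (0:ℝ) < 2)]
          norm_num
  have hx1 : x < 1 := by linarith
  have hErr := log_taylor_bound hx0 hx1
  have hNeq := N6_eq hη0
  have hs0 : (0:ℝ) < 1 - x ^ 2 := by nlinarith
  have hrat : 8 * x ^ 3 * (1 + x ^ 2) / (1 - x ^ 2) ^ 4
      - 3 * x * (1 + x ^ 2) / (1 - x ^ 2) ^ 2 + (3/2) * (2*x + 2/3*x^3)
      = x ^ 5 * (25 - 9*x^2 - x^4 + x^6) / (1 - x^2) ^ 4 := by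
    field_simp
    ring
  have hsplit : N₆ η = x ^ 5 * (25 - 9*x^2 - x^4 + x^6) / (1 - x^2) ^ 4
      + (3/2) * ((Real.log (1 + x) - Real.log (1 - x)) - (2*x + 2/3*x^3)) := by
    rw [hNeq, ← hrat]; ring
  -- bounds on the rational part
  have hden_le : (1 - x ^ 2) ^ 4 ≤ 1 := by
    have h1 : 1 - x ^ 2 ≤ 1 := by nlinarith
    calc (1 - x ^ 2) ^ 4 ≤ 1 ^ 4 := pow_le_pow_left₀ hs0.le h1 4
      _ = 1 := one_pow 4
  have hden_ge : (81:ℝ)/256 ≤ (1 - x ^ 2) ^ 4 := by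
    have h1 : (3:ℝ)/4 ≤ 1 - x ^ 2 := by nlinarith
    calc (81:ℝ)/256 = ((3:ℝ)/4) ^ 4 := by norm_num
      _ ≤ (1 - x ^ 2) ^ 4 := pow_le_pow_left₀ (by norm_num) h1 4
  have hnum_lb : (15:ℝ) ≤ 25 - 9*x^2 - x^4 + x^6 := by nlinarith
  have hnum_ub : 25 - 9*x^2 - x^4 + x^6 ≤ 26 := by nlinarith
  have hx5 : 0 < x ^ 5 := by positivity
  have hR_lb : 15 * x ^ 5 ≤ x ^ 5 * (25 - 9*x^2 - x^4 + x^6) / (1 - x^2) ^ 4 := by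
    rw [le_div_iff₀ (by positivity)]
    linarith [mul_le_mul_of_nonneg_left hden_le (le_of_lt hx5),
      mul_le_mul_of_nonneg_left hnum_lb (le_of_lt hx5)]
  have hR_ub : x ^ 5 * (25 - 9*x^2 - x^4 + x^6) / (1 - x^2) ^ 4 ≤ 83 * x ^ 5 := by
    rw [div_le_iff₀ (by positivity)]
    linarith [mul_le_mul_of_nonneg_left hden_ge (le_of_lt hx5),
      mul_le_mul_of_nonneg_left hnum_ub (le_of_lt hx5)]
  -- bound on the error term
  have hdb : x ^ 5 / (1 - x) ≤ 2 * x ^ 5 := by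
    rw [div_le_iff₀ (by linarith)]
    nlinarith [mul_le_mul_of_nonneg_left (show (1:ℝ) ≤ 2*(1-x) by linarith) (le_of_lt hx5)]
  have he := abs_le.mp hErr
  have heU : (Real.log (1 + x) - Real.log (1 - x)) - (2*x + 2/3*x^3) ≤ 4 * x ^ 5 := by
    linarith [he.2]
  have heL : -(4 * x ^ 5) ≤ (Real.log (1 + x) - Real.log (1 - x)) - (2*x + 2/3*x^3) := by
    linarith [he.1]
  constructor
  · rw [hsplit]; linarith
  · rw [hsplit]; linarith


/-- `N₆` is eventually positive and `lim_{η→∞} (1/η) log N₆(η) = -5`, i.e. the hitting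
probability of a hyperbolic ball for the 6-dimensional hyperbolic Brownian motion decays
with exponential rate `n - 1 = 5`. -/
theorem hitting_decay_dim6 :
    (∀ᶠ η : ℝ in Filter.atTop, 0 < N₆ η) ∧
    Filter.Tendsto (fun η : ℝ => (1 / η) * Real.log (N₆ η)) Filter.atTop (nhds (-5)) := by
  constructor
  · filter_upwards [eventually_ge_atTop (Real.log 2)] with η hη
    have h := (N6_bounds hη).1
    have : (0:ℝ) < 9 * exp (-η) ^ 5 := by positivity
    linarith
  · have hg : Tendsto (fun η : ℝ => Real.log 9 * (1/η) - 5) atTop (nhds (-5)) := by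
      have := (tendsto_inv_atTop_zero.const_mul (Real.log 9)).sub_const (5:ℝ)
      simpa [one_div] using this
    have hh : Tendsto (fun η : ℝ => Real.log 89 * (1/η) - 5) atTop (nhds (-5)) := by
      have := (tendsto_inv_atTop_zero.const_mul (Real.log 89)).sub_const (5:ℝ)
      simpa [one_div] using this
    refine tendsto_of_tendsto_of_tendsto_of_le_of_le' hg hh ?_ ?_
    · filter_upwards [eventually_ge_atTop (Real.log 2), eventually_gt_atTop (0:ℝ)] with η hη hη0
      obtain ⟨hl, hu⟩ := N6_bounds hη
      have hex : (0:ℝ) < 9 * exp (-η) ^ 5 := by positivity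
      have l1 : Real.log (9 * exp (-η) ^ 5) ≤ Real.log (N₆ η) :=
        Real.log_le_log hex hl
      have l1' : Real.log (9 * exp (-η) ^ 5) = Real.log 9 - 5 * η := by
        rw [Real.log_mul (by norm_num) (by positivity), Real.log_pow, Real.log_exp]
        push_cast; ring
      have hinv : (0:ℝ) < 1/η := by positivity
      have := mul_le_mul_of_nonneg_left l1 (le_of_lt hinv)
      rw [l1'] at this
      have heq : (1/η) * (Real.log 9 - 5 * η) = Real.log 9 * (1/η) - 5 := by
        field_simp
      linarith
    · filter_upwards [eventually_ge_atTop (Real.log 2), eventually_gt_atTop (0:ℝ)] with η hη hη0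
      obtain ⟨hl, hu⟩ := N6_bounds hη
      have hex : (0:ℝ) < 9 * exp (-η) ^ 5 := by positivity
      have hpos : 0 < N₆ η := lt_of_lt_of_le hex hl
      have l1 : Real.log (N₆ η) ≤ Real.log (89 * exp (-η) ^ 5) :=
        Real.log_le_log hpos hu
      have l1' : Real.log (89 * exp (-η) ^ 5) = Real.log 89 - 5 * η := by
        rw [Real.log_mul (by norm_num) (by positivity), Real.log_pow, Real.log_exp]
        push_cast; ring
      have hinv : (0:ℝ) < 1/η := by positivity
      have := mul_le_mul_of_nonneg_left l1 (le_of_lt hinv)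
      rw [l1'] at this
      have heq : (1/η) * (Real.log 89 - 5 * η) = Real.log 89 * (1/η) - 5 := by
        field_simp
      linarith
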